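/- arXiv:1403.5632 — 6 statements merged into one kernel-verified Lean document; each statement's English description precedes it below -/
import Mathlib

section
/- For x > 0, the series ∑_{r=0}^∞ Γ(r/3 + 1/3)/Γ(r/3 + 7/3) · (-x)^r / r! equals 3(1/x - 6/x^4) + 9 x^{-2} e^{-x} (1 + 2/x + 2/x^2). -/
open Real

/-! Writing `s = (r + 1)/3`, the Gamma ratio is `1/(s(s+1)) = 9/((r+1)(r+4))`, so the `r`-th
coefficient is `9(r+2)(r+3)/(r+4)! = 9/(r+2)! - 18/(r+3)! + 18/(r+4)!`. Each of the three
pieces is a tail of the exponential series divided by a power of `-x`, and summing them gives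
the closed form. -/

open Finset in
theorem Real.hasSum_pow_div_factorial_add (k : ℕ) {y : ℝ} (hy : y ≠ 0) :
    HasSum (fun n : ℕ => y ^ n / (n + k).factorial)
      ((exp y - ∑ i ∈ range k, y ^ i / i.factorial) / y ^ k) := by
  have htail : HasSum (fun n : ℕ => y ^ (n + k) / (n + k).factorial)
      (exp y - ∑ i ∈ range k, y ^ i / i.factorial) := by
    refine (hasSum_nat_add_iff' k).mpr ?_
    rw [Real.exp_eq_exp_ℝ]
    exact NormedSpace.expSeries_div_hasSum_exp y
  refine (htail.div_const (y ^ k)).congr_fun fun n => ?_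
  rw [pow_add]
  field_simp

theorem Real.Gamma_div_Gamma_add_two {s : ℝ} (hs : ∀ m : ℕ, s ≠ -m) :
    Gamma s / Gamma (s + 2) = 1 / (s * (s + 1)) := by
  have hs0 : s ≠ 0 := by simpa using hs 0
  have hs1 : s + 1 ≠ 0 := fun h => hs 1 (by push_cast; linarith)
  rw [show s + 2 = s + 1 + 1 by ring, Gamma_add_one hs1, Gamma_add_one hs0]
  field_simp [Gamma_ne_zero hs]

theorem gamma_ratio_div_factorial (r : ℕ) :
    Gamma ((r : ℝ) / 3 + 1 / 3) / Gamma ((r : ℝ) / 3 + 7 / 3) / r.factorial =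
      9 / (r + 2).factorial - 18 / (r + 3).factorial + 18 / (r + 4).factorial := by
  have hs : ∀ m : ℕ, (r : ℝ) / 3 + 1 / 3 ≠ -m := fun m h => by
    linarith [(r.cast_nonneg : (0 : ℝ) ≤ r), (m.cast_nonneg : (0 : ℝ) ≤ m)]
  rw [show (r : ℝ) / 3 + 7 / 3 = (r : ℝ) / 3 + 1 / 3 + 2 by ring, Real.Gamma_div_Gamma_add_two hs]
  simp only [Nat.factorial_succ]
  push_cast
  field_simp
  ring

/-- For `x > 0`, the Wright function `₁Ψ₁` with `α = β = 1/3`, `a = 1/3`, `b = 7/3`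
evaluated at `-x` has the closed form
`3(1/x - 6/x⁴) + 9 x⁻² e⁻ˣ (1 + 2/x + 2/x²)`. -/
theorem wright_one_psi_one_closed_form (x : ℝ) (hx : 0 < x) :
    ∑' r : ℕ, Real.Gamma ((r : ℝ) / 3 + 1 / 3) / Real.Gamma ((r : ℝ) / 3 + 7 / 3) *
        (-x) ^ r / (Nat.factorial r) =
      3 * (1 / x - 6 / x ^ 4) +
        9 * x ^ (-2 : ℤ) * Real.exp (-x) * (1 + 2 / x + 2 / x ^ 2) := by
  have hy : -x ≠ 0 := neg_ne_zero.mpr hx.ne'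
  have hterm : ∀ r : ℕ,
      Gamma ((r : ℝ) / 3 + 1 / 3) / Gamma ((r : ℝ) / 3 + 7 / 3) * (-x) ^ r / r.factorial =
        9 * ((-x) ^ r / (r + 2).factorial) - 18 * ((-x) ^ r / (r + 3).factorial) +
          18 * ((-x) ^ r / (r + 4).factorial) := fun r => by
    rw [mul_div_right_comm, gamma_ratio_div_factorial]
    ring
  have hsum := (((hasSum_pow_div_factorial_add 2 hy).mul_left 9).sub
    ((hasSum_pow_div_factorial_add 3 hy).mul_left 18)).add
    ((hasSum_pow_div_factorial_add 4 hy).mul_left 18)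
  rw [tsum_congr hterm, hsum.tsum_eq]
  simp only [Finset.sum_range_succ, Finset.sum_range_zero, Nat.factorial, zpow_neg]
  field_simp
  ring
end

section
/- For each r ≥ 0 and all z, ∑_{k=0}^∞ (αk + b)_r z^k/k! = ℘_r(z) e^z, where ℘_r are the polynomials defined recursively by ℘_0(z) = 1 and ℘_{r+1}(z) = (αz + b + r)℘_r(z) + αz ℘_r'(z). -/
open Polynomial Real

/-- Auxiliary polynomials: `W α 0 b = 1`,
`W α (r+1) b = (b+r) • W α r b + α X • W α r (b+α)`. -/
noncomputable def wrightW (α : ℝ) : ℕ → ℝ → Polynomial ℝ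
  | 0, _ => 1
  | r + 1, b => Polynomial.C (b + r) * wrightW α r b +
      Polynomial.C α * Polynomial.X * wrightW α r (b + α)

lemma wrightW_shift (α : ℝ) : ∀ (r : ℕ) (b : ℝ),
    wrightW α r (b + α) = wrightW α r b + Polynomial.derivative (wrightW α r b) := by
  intro r
  induction r with
  | zero => intro b; simp [wrightW]
  | succ r ih =>
    intro b
    have h1 := ih b
    have h2 := ih (b + α)
    simp only [wrightW, derivative_add, derivative_mul, derivative_C, derivative_X]
    rw [h2]
    have hD1 : Polynomial.derivative (wrightW α r b) = wrightW α r (b + α) - wrightW α r b := by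
      rw [h1]; ring
    have hD2 : Polynomial.derivative (wrightW α r (b + α)) =
        wrightW α r (b + α + α) - wrightW α r (b + α) := by
      rw [h2]; ring
    rw [hD1, hD2]
    rw [show (b + α + (r : ℝ)) = α + (b + r) from by ring, Polynomial.C_add]
    ring

lemma wrightW_eq_P (α b : ℝ) (P : ℕ → Polynomial ℝ)
    (hP0 : P 0 = 1)
    (hPrec : ∀ r : ℕ, P (r + 1) =
      (Polynomial.C α * Polynomial.X + Polynomial.C (b + r)) * P r +
        Polynomial.C α * Polynomial.X * Polynomial.derivative (P r)) :
    ∀ r : ℕ, wrightW α r b = P r := by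
  intro r
  induction r with
  | zero => simp [wrightW, hP0]
  | succ r ih =>
    rw [hPrec r, ← ih]
    simp only [wrightW]
    rw [wrightW_shift α r b]
    ring

/-- The key analytic lemma, proved by induction on `r` with `b` universally
quantified, together with summability. -/
lemma wright_key (α : ℝ) : ∀ (r : ℕ) (b z : ℝ),
    Summable (fun k : ℕ =>
      (ascPochhammer ℝ r).eval (α * k + b) * z ^ k / (Nat.factorial k)) ∧
    ∑' k : ℕ, (ascPochhammer ℝ r).eval (α * k + b) * z ^ k / (Nat.factorial k)
      = (wrightW α r b).eval z * Real.exp z := by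
  intro r
  induction r with
  | zero =>
    intro b z
    simp only [ascPochhammer_zero, Polynomial.eval_one, one_mul, wrightW]
    constructor
    · exact Real.summable_pow_div_factorial z
    · rw [Real.exp_eq_exp_ℝ, NormedSpace.exp_eq_tsum_div]
  | succ r ih =>
    intro b z
    -- terms
    set T : ℝ → ℕ → ℝ := fun c k =>
      (ascPochhammer ℝ r).eval (α * k + c) * z ^ k / (Nat.factorial k) with hT
    have hsum1 : Summable (T b) := (ih b z).1
    have hsum2 : Summable (T (b + α)) := (ih (b + α) z).1
    -- g k = k * T b k
    set g : ℕ → ℝ := fun k => (k : ℝ) * T b k with hg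
    have hgshift : ∀ k : ℕ, g (k + 1) = z * T (b + α) k := by
      intro k
      simp only [hg, hT]
      rw [Nat.factorial_succ]
      push_cast
      have h1 : α * (↑k + 1) + b = α * ↑k + (b + α) := by ring
      rw [h1]
      have hk : ((k : ℝ) + 1) ≠ 0 := by positivity
      field_simp
      ring
    have hgsummable : Summable g := by
      rw [← summable_nat_add_iff 1]
      simp only [hgshift]
      exact hsum2.mul_left z
    have htsum_g : ∑' k, g k = z * ((wrightW α r (b + α)).eval z * Real.exp z) := by
      rw [Summable.tsum_eq_zero_add hgsummable]
      simp only [hgshift]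
      simp only [hg, Nat.cast_zero, zero_mul, zero_add]
      rw [tsum_mul_left, (ih (b + α) z).2]
    -- new term decomposition
    have hterm : ∀ k : ℕ,
        (ascPochhammer ℝ (r + 1)).eval (α * k + b) * z ^ k / (Nat.factorial k)
          = (b + r) * T b k + α * g k := by
      intro k
      rw [ascPochhammer_succ_right]
      simp only [Polynomial.eval_mul, Polynomial.eval_add, Polynomial.eval_X,
        Polynomial.eval_natCast, hT, hg]
      field_simp
      ring
    constructor
    · apply Summable.congr (f := fun k => (b + r) * T b k + α * g k)
      · exact (hsum1.mul_left _).add (hgsummable.mul_left _)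
      · intro k; exact (hterm k).symm
    · calc ∑' k : ℕ, (ascPochhammer ℝ (r + 1)).eval (α * k + b) * z ^ k / (Nat.factorial k)
          = ∑' k : ℕ, ((b + r) * T b k + α * g k) := by
            exact tsum_congr hterm
        _ = (b + r) * ∑' k, T b k + α * ∑' k, g k := by
            rw [Summable.tsum_add (hsum1.mul_left _) (hgsummable.mul_left _),
              tsum_mul_left, tsum_mul_left]
        _ = (wrightW α (r + 1) b).eval z * Real.exp z := by
            rw [(ih b z).2, htsum_g]
            simp only [wrightW, Polynomial.eval_add, Polynomial.eval_mul,
              Polynomial.eval_C, Polynomial.eval_X]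
            ring

/-- For the polynomials `℘_r` defined by `℘_0 = 1` and
`℘_{r+1}(z) = (αz + b + r)℘_r(z) + αz ℘_r'(z)`, one has
`∑_{k=0}^∞ (αk + b)_r z^k/k! = ℘_r(z) e^z` for every `r` and `z`. -/
theorem wright_polynomial_times_exp (α b : ℝ) (P : ℕ → Polynomial ℝ)
    (hP0 : P 0 = 1)
    (hPrec : ∀ r : ℕ, P (r + 1) =
      (Polynomial.C α * Polynomial.X + Polynomial.C (b + r)) * P r +
        Polynomial.C α * Polynomial.X * Polynomial.derivative (P r)) :
    ∀ (r : ℕ) (z : ℝ),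
      ∑' k : ℕ, (ascPochhammer ℝ r).eval (α * k + b) * z ^ k / (Nat.factorial k)
        = (P r).eval z * Real.exp z := by
  intro r z
  rw [(wright_key α r b z).2, wrightW_eq_P α b P hP0 hPrec r]
end

section
/- If κ := 1 + β - α > 0, where α, β > 0, then the series ∑_{r=0}^∞ Γ(αr + a)/Γ(βr + b) · z^r/r! converges absolutely for every complex z (assuming αr + a is never a nonpositive integer). -/
/-!
Compare with a real majorant. For `0 < Re s` we have `‖Γ s‖ ≤ Γ (Re s)`, and on a horizontal
line `Im w = y` the ratio `‖Γ w‖ / Γ (Re w)` is bounded below by a positive constant: it is so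
on the compact segment `1 ≤ Re w ≤ 2`, and it does not decrease under `w ↦ w + 1` because
`Re w ≤ ‖w‖`. The terms are thus eventually dominated by
`Γ (αr + Re a) / Γ (βr + Re b) · |z|^r / r!`, and by log-convexity of `Γ` the ratio of
consecutive terms of this majorant is at most
`|z| (αr + Re a + α)^α / ((βr + Re b - 1)^β (r + 1))`, which is of order `r^(α - β - 1) → 0`.
-/

open Complex Filter Topology Set

namespace Real

theorem Gamma_add_le_mul_rpow {s h : ℝ} (hs : 0 < s) (hh : 0 ≤ h) :
    Gamma (s + h) ≤ Gamma s * (s + h) ^ h := by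
  rcases hh.eq_or_lt with rfl | hh
  · simp
  have hsh : 0 < s + h := by linarith
  have slope := convexOn_log_Gamma.slope_mono_adjacent (mem_Ioi.2 hs)
    (mem_Ioi.2 (by linarith : 0 < s + h + 1)) (by linarith : s < s + h) (lt_add_one _)
  rw [Function.comp_apply, Function.comp_apply, Function.comp_apply, Gamma_add_one hsh.ne',
    log_mul hsh.ne' (Gamma_pos_of_pos hsh).ne', add_sub_cancel_left, add_sub_cancel_left,
    div_one, add_sub_cancel_right, div_le_iff₀ hh] at slope
  rw [← log_le_log_iff (Gamma_pos_of_pos hsh) (by positivity),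
    log_mul (Gamma_pos_of_pos hs).ne' (by positivity), log_rpow hsh]
  linarith

theorem Gamma_mul_rpow_le_Gamma_add {s h : ℝ} (hs : 1 < s) (hh : 0 ≤ h) :
    Gamma s * (s - 1) ^ h ≤ Gamma (s + h) := by
  rcases hh.eq_or_lt with rfl | hh
  · simp
  have hs₁ : 0 < s - 1 := by linarith
  have slope := convexOn_log_Gamma.slope_mono_adjacent (mem_Ioi.2 hs₁)
    (mem_Ioi.2 (by linarith : 0 < s + h)) (by linarith : s - 1 < s) (by linarith : s < s + h)
  have hΓ : Gamma s = (s - 1) * Gamma (s - 1) := by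
    simpa using Gamma_add_one hs₁.ne'
  rw [Function.comp_apply, Function.comp_apply, Function.comp_apply, hΓ,
    log_mul hs₁.ne' (Gamma_pos_of_pos hs₁).ne', sub_sub_cancel, div_one, add_sub_cancel_right,
    add_sub_cancel_left, le_div_iff₀ hh] at slope
  rw [← log_le_log_iff (by positivity) (Gamma_pos_of_pos (by linarith)), hΓ,
    log_mul (by positivity) (by positivity), log_mul hs₁.ne' (Gamma_pos_of_pos hs₁).ne',
    log_rpow hs₁]
  linarith

end Real

namespace Complex

theorem norm_Gamma_le_Gamma_re {s : ℂ} (hs : 0 < s.re) : ‖Gamma s‖ ≤ Real.Gamma s.re := by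
  rw [Gamma_eq_integral hs, GammaIntegral, Real.Gamma_eq_integral hs]
  refine (MeasureTheory.norm_integral_le_integral_norm _).trans_eq
    (MeasureTheory.setIntegral_congr_fun measurableSet_Ioi fun x hx => ?_)
  simp [norm_cpow_eq_rpow_re_of_pos hx, norm_exp]

theorem exists_pos_mul_Gamma_re_le_norm_Gamma (y : ℝ) :
    ∃ c > 0, ∀ w : ℂ, w.im = y → 1 ≤ w.re → c * Real.Gamma w.re ≤ ‖Gamma w‖ := by
  set g : ℝ → ℝ := fun t => ‖Gamma (t + y * I)‖ / Real.Gamma t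
  have hg : ContinuousOn g (Icc 1 2) := fun t ht => by
    have ht₀ : 0 < t := by linarith [ht.1]
    have hΓ : ContinuousAt (fun t : ℝ => Gamma (t + y * I)) t :=
      (differentiableAt_Gamma _ fun m h => by
        have := congrArg re h; simp at this; linarith [m.cast_nonneg (α := ℝ)]).continuousAt.comp
        (by fun_prop)
    have hΓℝ : ContinuousAt Real.Gamma t := (Real.differentiableAt_Gamma fun m h => by
      linarith [m.cast_nonneg (α := ℝ)]).continuousAt
    exact (hΓ.norm.div hΓℝ (Real.Gamma_pos_of_pos ht₀).ne').continuousWithinAt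
  obtain ⟨t₀, ht₀, hmin⟩ := isCompact_Icc.exists_isMinOn (nonempty_Icc.2 one_le_two) hg
  have hc : 0 < g t₀ :=
    div_pos (norm_pos_iff.2 (Gamma_ne_zero_of_re_pos (by simp; linarith [ht₀.1])))
      (Real.Gamma_pos_of_pos (by linarith [ht₀.1]))
  refine ⟨g t₀, hc, fun w hw hw₁ => ?_⟩
  obtain ⟨n, hn⟩ := exists_nat_ge (w.re - 2)
  induction n generalizing w with
  | zero =>
    have hw : w = (w.re : ℂ) + y * I := by rw [← hw, re_add_im]
    have := hmin (show w.re ∈ Icc (1 : ℝ) 2 from ⟨hw₁, by simpa using hn⟩)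
    simp only [mem_ofPred_eq, g, ← hw] at this
    exact (le_div_iff₀ (Real.Gamma_pos_of_pos (by linarith))).1 this
  | succ n ih =>
    rcases le_or_gt (w.re - 2) n with h | h
    · exact ih w hw hw₁ h
    have hre : (w - 1).re = w.re - 1 := by simp
    have hw' := ih (w - 1) (by simpa using hw) (by linarith) (by push_cast at hn; linarith)
    have hΓ : Gamma w = (w - 1) * Gamma (w - 1) := by
      simpa using Gamma_add_one (w - 1) fun h₀ => by simp [h₀] at hre; linarith
    have hΓℝ : Real.Gamma w.re = (w.re - 1) * Real.Gamma (w.re - 1) := by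
      simpa using Real.Gamma_add_one (s := w.re - 1) (by linarith)
    rw [hΓ, hΓℝ, norm_mul, mul_left_comm]
    rw [hre] at hw'
    exact mul_le_mul (hre ▸ re_le_norm _) hw' (by positivity) (norm_nonneg _)

end Complex

theorem tendsto_affine_rpow_div_affine_rpow_mul_self_atTop {a b p q : ℝ} (ha : 0 < a)
    (hb : 0 < b) (hp : 0 ≤ p) (hq : 0 ≤ q) (hpq : p < 1 + q) (A B : ℝ) :
    Tendsto (fun u : ℝ => (a * u + A) ^ p / ((b * u + B) ^ q * u)) atTop (𝓝 0) := by
  have hK : Tendsto (fun u : ℝ => (a + |A|) ^ p / (b / 2) ^ q * u ^ (-(1 + q - p))) atTop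
      (𝓝 0) := by
    have := (tendsto_rpow_neg_atTop (by linarith : 0 < 1 + q - p)).const_mul
      ((a + |A|) ^ p / (b / 2) ^ q)
    rwa [mul_zero] at this
  refine tendsto_of_tendsto_of_tendsto_of_le_of_le' tendsto_const_nhds hK ?_ ?_
  all_goals filter_upwards [eventually_ge_atTop 1, eventually_ge_atTop (|A| / a),
    eventually_ge_atTop (2 * |B| / b)] with u hu₁ hu_A hu_B
  · have hA : 0 ≤ a * u + A := by
      linarith [neg_abs_le A, (div_le_iff₀' ha).1 hu_A]
    have hB : 0 ≤ b * u + B := by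
      linarith [neg_abs_le B, (div_le_iff₀' hb).1 hu_B, abs_nonneg B]
    positivity
  · have hu : 0 < u := by linarith
    calc (a * u + A) ^ p / ((b * u + B) ^ q * u)
        ≤ ((a + |A|) * u) ^ p / ((b / 2 * u) ^ q * u) := by
          gcongr
          · linarith [neg_abs_le A, (div_le_iff₀' ha).1 hu_A]
          · linarith [le_abs_self A, mul_le_mul_of_nonneg_left hu₁ (abs_nonneg A)]
          · linarith [neg_abs_le B, (div_le_iff₀' hb).1 hu_B, abs_nonneg B]
      _ = (a + |A|) ^ p / (b / 2) ^ q * u ^ (-(1 + q - p)) := by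
          rw [Real.mul_rpow (by positivity) hu.le, Real.mul_rpow (by positivity) hu.le,
            show -(1 + q - p) = p - q - 1 by ring, Real.rpow_sub_one hu.ne', Real.rpow_sub hu]
          field_simp

theorem tendsto_affine_natCast_atTop {α : ℝ} (hα : 0 < α) (A : ℝ) :
    Tendsto (fun r : ℕ => α * r + A) atTop atTop :=
  tendsto_atTop_add_const_right _ A (tendsto_natCast_atTop_atTop.const_mul_atTop hα)

open Nat in
theorem Real.summable_Gamma_div_Gamma_mul_pow_div_factorial {α β : ℝ} (hα : 0 < α)
    (hβ : 0 < β) (hκ : α < 1 + β) (A B x : ℝ) :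
    Summable fun r : ℕ => Real.Gamma (α * r + A) / Real.Gamma (β * r + B) * x ^ r / r ! := by
  have hratio : Tendsto (fun r : ℕ => |x| * ((α * (r + 1) + A) ^ α /
      ((β * (r + 1) + (B - β - 1)) ^ β * (r + 1)))) atTop (𝓝 0) := by
    simpa using ((tendsto_affine_rpow_div_affine_rpow_mul_self_atTop hα hβ hα.le hβ.le hκ A
      (B - β - 1)).comp
      (tendsto_affine_natCast_atTop one_pos 1)).const_mul |x|
  refine summable_of_ratio_norm_eventually_le (r := 1 / 2) (by norm_num) ?_
  filter_upwards [hratio.eventually_le_const (by norm_num : (0 : ℝ) < 1 / 2),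
    (tendsto_affine_natCast_atTop hα A).eventually_gt_atTop 0,
    (tendsto_affine_natCast_atTop hβ B).eventually_gt_atTop 1]
    with r hρ hA hB
  rw [show α * ((r : ℝ) + 1) + A = α * r + A + α by ring,
    show β * ((r : ℝ) + 1) + (B - β - 1) = β * r + B - 1 by ring] at hρ
  rw [show α * ((r + 1 : ℕ) : ℝ) + A = α * r + A + α by push_cast; ring,
    show β * ((r + 1 : ℕ) : ℝ) + B = β * r + B + β by push_cast; ring]
  generalize α * r + A = s at hρ hA ⊢
  generalize β * r + B = t at hρ hB ⊢
  have hΓs := Real.Gamma_pos_of_pos hA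
  have hΓt := Real.Gamma_pos_of_pos (by linarith : 0 < t)
  calc ‖Real.Gamma (s + α) / Real.Gamma (t + β) * x ^ (r + 1) / ((r + 1)! : ℝ)‖
      = Real.Gamma (s + α) / Real.Gamma (t + β) * |x| ^ (r + 1) / ((r + 1)! : ℝ) := by
        rw [norm_div, norm_mul, norm_div, norm_pow, Real.norm_eq_abs, Real.norm_eq_abs,
          Real.norm_eq_abs, Real.norm_eq_abs, abs_of_pos (Real.Gamma_pos_of_pos (by linarith)),
          abs_of_pos (Real.Gamma_pos_of_pos (by linarith)), Nat.abs_cast]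
    _ ≤ Real.Gamma s * (s + α) ^ α / (Real.Gamma t * (t - 1) ^ β) * |x| ^ (r + 1) /
          ((r + 1)! : ℝ) := by
        gcongr
        · exact Real.Gamma_add_le_mul_rpow hA hα.le
        · exact Real.Gamma_mul_rpow_le_Gamma_add hB hβ.le
    _ = |x| * ((s + α) ^ α / ((t - 1) ^ β * (r + 1))) *
          ‖Real.Gamma s / Real.Gamma t * x ^ r / (r ! : ℝ)‖ := by
        have : 0 < (t - 1) ^ β := Real.rpow_pos_of_pos (by linarith) β
        rw [Real.norm_eq_abs, abs_div, abs_mul, abs_div, abs_pow, abs_of_pos hΓs, abs_of_pos hΓt,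
          Nat.abs_cast, Nat.factorial_succ, pow_succ]
        push_cast
        field_simp
    _ ≤ 1 / 2 * ‖Real.Gamma s / Real.Gamma t * x ^ r / (r ! : ℝ)‖ := by gcongr

theorem wright_summable_of_kappa_pos_general (α β : ℝ) (a b : ℂ)
    (hα : 0 < α) (hβ : 0 < β) (hκ : 0 < 1 + β - α) :
    ∀ z : ℂ, Summable (fun r : ℕ =>
      ‖Complex.Gamma ((α * r : ℝ) + a) / Complex.Gamma ((β * r : ℝ) + b) *
        z ^ r / (Nat.factorial r)‖) := by
  intro z
  obtain ⟨c, hc, hΓb⟩ := exists_pos_mul_Gamma_re_le_norm_Gamma b.im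
  refine .of_norm_bounded_eventually_nat ((Real.summable_Gamma_div_Gamma_mul_pow_div_factorial
    hα hβ (by linarith) a.re b.re ‖z‖).div_const c) ?_
  filter_upwards [(tendsto_affine_natCast_atTop hα a.re).eventually_gt_atTop 0,
    (tendsto_affine_natCast_atTop hβ b.re).eventually_ge_atTop 1]
    with r ha hb
  have hnum := norm_Gamma_le_Gamma_re (s := ((α * r : ℝ) : ℂ) + a) (by simpa using ha)
  have hden := hΓb (((β * r : ℝ) : ℂ) + b) (by simp) (by simpa using hb)
  simp only [add_re, ofReal_re] at hnum hden
  have hΓ := Real.Gamma_pos_of_pos (by linarith : 0 < β * r + b.re)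
  rw [norm_norm, norm_div, norm_mul, norm_div, norm_pow, norm_natCast]
  calc _ ≤ Real.Gamma (α * r + a.re) / (c * Real.Gamma (β * r + b.re)) * ‖z‖ ^ r /
        r.factorial := by gcongr
    _ = _ := by ring

/-- If `κ = 1 + β - α > 0` with `α, β > 0`, then the Wright series
`∑ Γ(αr+a)/Γ(βr+b) zʳ/r!` converges absolutely for every complex `z`
(assuming `αr + a` is never a nonpositive integer). -/
theorem wright_summable_of_kappa_pos (α β : ℝ) (a b : ℂ)
    (hα : 0 < α) (hβ : 0 < β) (hκ : 0 < 1 + β - α)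
    (ha : ∀ r k : ℕ, (α * r : ℂ) + a ≠ -(k : ℂ)) :
    ∀ z : ℂ, Summable (fun r : ℕ =>
      ‖Complex.Gamma ((α * r : ℝ) + a) / Complex.Gamma ((β * r : ℝ) + b) *
        z ^ r / (Nat.factorial r)‖) :=
  wright_summable_of_kappa_pos_general α β a b hα hβ hκ
end

section
/- For a positive integer n, the rational function s ↦ ∏_{j=1}^n (s - (b + j - 1)/α)/(s + j - 1) admits an expansion of the form 1 + ∑_{j=1}^n c_j/((1 - s - n)_j) with c_j constants, and the top coefficient is c_n = α^{-n}(b)_n; in particular the expansion terminates: c_j = 0 for j > n. -/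
open Polynomial Finset

lemma ascPochhammer_eval_prod (j : ℕ) (x : ℝ) :
    (ascPochhammer ℝ j).eval x = ∏ i ∈ Finset.range j, (x + i) := by
  induction j with
  | zero => simp
  | succ k ih => rw [ascPochhammer_succ_eval, ih, Finset.prod_range_succ]

lemma expand_aux (n : ℕ) : ∀ (t : ℝ) (Q : ℝ[X]), Q.degree ≤ n →
    ∃ c : ℕ → ℝ, c 0 = Q.coeff n ∧ (∀ j, n < j → c j = 0) ∧
      ∀ x : ℝ, Q.eval x = ∑ j ∈ Finset.range (n + 1),
        c j * ∏ i ∈ Finset.Ico j n, (x + t + i) := by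
  induction n with
  | zero =>
    intro t Q hQ
    refine ⟨fun j => if j = 0 then Q.coeff 0 else 0, by simp,
      fun j hj => if_neg (by omega), ?_⟩
    intro x
    rw [eq_C_of_degree_le_zero hQ]
    simp
  | succ n ih =>
    intro t Q hQ
    set G : ℝ[X] := ∏ i ∈ Finset.range (n + 1), (X + C (t + i)) with hG
    have hGm : G.Monic := monic_prod_of_monic _ _ fun i _ => monic_X_add_C _
    have hGd : G.natDegree = n + 1 := by
      rw [hG, natDegree_prod_of_monic _ _ fun i _ => monic_X_add_C _]
      simp only [natDegree_X_add_C]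
      simp
    set Q' : ℝ[X] := Q - C (Q.coeff (n + 1)) * G with hQ'
    have hQ'd : Q'.degree ≤ n := by
      rw [degree_le_iff_coeff_zero]
      intro m hm
      have hm' : n + 1 ≤ m := by exact_mod_cast Nat.add_one_le_iff.mpr (by exact_mod_cast hm)
      rcases eq_or_lt_of_le hm' with h | h
      · have hG1 : G.coeff (n + 1) = 1 := by
          rw [← hGd]; exact hGm.coeff_natDegree
        rw [hQ', coeff_sub, coeff_C_mul, ← h, hG1, mul_one, sub_self]
      · have h1 : Q.coeff m = 0 := coeff_eq_zero_of_degree_lt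
          (lt_of_le_of_lt hQ (by exact_mod_cast h))
        have h2 : G.coeff m = 0 := coeff_eq_zero_of_natDegree_lt (hGd ▸ h)
        rw [hQ', coeff_sub, coeff_C_mul, h1, h2, mul_zero, sub_self]
    obtain ⟨d, hd0, hdz, hdev⟩ := ih (t + 1) Q' hQ'd
    refine ⟨fun j => if j = 0 then Q.coeff (n + 1) else d (j - 1), by simp, ?_, ?_⟩
    · intro j hj
      have hj0 : j ≠ 0 := by omega
      simp only [if_neg hj0]
      exact hdz _ (by omega)
    · intro x
      have key : eval x Q = Q.coeff (n + 1) * eval x G + eval x Q' := by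
        rw [hQ', eval_sub, eval_mul, eval_C]; ring
      have hGev : eval x G = ∏ i ∈ Finset.Ico 0 (n + 1), (x + t + (i : ℝ)) := by
        rw [hG, eval_prod, Finset.range_eq_Ico]
        exact Finset.prod_congr rfl fun i _ => by rw [eval_add, eval_X, eval_C]; ring
      have hsum : ∑ j ∈ Finset.range (n + 2),
            (if j = 0 then Q.coeff (n + 1) else d (j - 1)) *
              ∏ i ∈ Finset.Ico j (n + 1), (x + t + (i : ℝ))
          = Q.coeff (n + 1) * ∏ i ∈ Finset.Ico 0 (n + 1), (x + t + (i : ℝ))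
            + ∑ j ∈ Finset.range (n + 1), d j * ∏ i ∈ Finset.Ico j n, (x + (t + 1) + (i : ℝ)) := by
        rw [Finset.sum_range_succ']
        simp only [if_neg (Nat.succ_ne_zero _), Nat.add_sub_cancel, if_pos rfl]
        rw [add_comm]
        congr 1
        refine Finset.sum_congr rfl fun j hj => ?_
        congr 1
        rw [Finset.prod_Ico_eq_prod_range, Finset.prod_Ico_eq_prod_range, Nat.succ_sub_succ]
        refine Finset.prod_congr rfl fun i _ => ?_
        push_cast
        ring
      rw [key, hdev x, hsum, hGev]

/-- For a positive integer `n` and `α ≠ 0`, the rational function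
`s ↦ ∏_{j=1}^n (s-(b+j-1)/α)/(s+j-1)` admits a terminating expansion
`1 + ∑_{j=1}^n c_j/((1-s-n)_j)` whose top coefficient is `c_n = α⁻ⁿ (b)_n`;
in particular `c_j = 0` for `j > n`. -/
theorem inverse_factorial_expansion_theta_pos_n (n : ℕ) (hn : 0 < n) (α b : ℝ)
    (hα : α ≠ 0) :
    ∃ c : ℕ → ℝ,
      c 0 = 1 ∧
      (∀ j : ℕ, n < j → c j = 0) ∧
      c n = α ^ (-(n : ℤ)) * (ascPochhammer ℝ n).eval b ∧
      ∀ s : ℝ, (∀ j ∈ Finset.range n, s ≠ -(j : ℝ)) →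
        (∀ j : ℕ, j ≤ n → (ascPochhammer ℝ j).eval (1 - s - n) ≠ 0) →
        ∏ j ∈ Finset.range n, (s - (b + j) / α) / (s + j) =
          ∑ j ∈ Finset.range (n + 1), c j / (ascPochhammer ℝ j).eval (1 - s - n) := by
  set Q : ℝ[X] := ∏ j ∈ Finset.range n, (X + C ((n : ℝ) - 1 + (b + j) / α)) with hQdef
  have hQm : Q.Monic := monic_prod_of_monic _ _ fun i _ => monic_X_add_C _
  have hQnd : Q.natDegree = n := by
    rw [hQdef, natDegree_prod_of_monic _ _ fun i _ => monic_X_add_C _]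
    simp only [natDegree_X_add_C]
    simp
  have hQd : Q.degree ≤ n := hQnd ▸ degree_le_natDegree
  obtain ⟨c, hc0, hcz, hcev⟩ := expand_aux n 0 Q hQd
  simp only [add_zero] at hcev
  have hc0' : c 0 = 1 := by rw [hc0, ← hQnd, hQm.coeff_natDegree]
  have hQev : ∀ x : ℝ, Q.eval x = ∏ j ∈ Finset.range n, (x + ((n : ℝ) - 1 + (b + j) / α)) := by
    intro x
    rw [hQdef, eval_prod]
    exact Finset.prod_congr rfl fun i _ => by rw [eval_add, eval_X, eval_C]
  have hcn : c n = α ^ (-(n : ℤ)) * (ascPochhammer ℝ n).eval b := by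
    have h1 := hcev (1 - n)
    rw [hQev] at h1
    have h2 : ∑ j ∈ Finset.range (n + 1), c j * ∏ i ∈ Finset.Ico j n, ((1 - (n : ℝ)) + i)
        = c n := by
      rw [Finset.sum_eq_single_of_mem n (Finset.self_mem_range_succ n)]
      · simp
      · intro j hj hjn
        have hjlt : j < n := by have := Finset.mem_range.mp hj; omega
        have hz : (1 : ℝ) - n + ((n - 1 : ℕ) : ℝ) = 0 := by
          rw [Nat.cast_pred hn]; ring
        rw [Finset.prod_eq_zero (i := n - 1) (Finset.mem_Ico.mpr ⟨by omega, by omega⟩) hz, mul_zero]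
    rw [h2] at h1
    rw [← h1, ascPochhammer_eval_prod,
      Finset.prod_congr rfl fun j (_ : j ∈ Finset.range n) =>
        show (1 : ℝ) - n + ((n : ℝ) - 1 + (b + j) / α) = (b + j) * α⁻¹ by
          rw [div_eq_mul_inv]; ring,
      Finset.prod_mul_distrib, Finset.prod_const, Finset.card_range]
    rw [zpow_neg, zpow_natCast, ← inv_pow]
    ring
  refine ⟨c, hc0', hcz, hcn, ?_⟩
  intro s hs hp
  set x : ℝ := 1 - s - n with hx
  have hPn : (∏ i ∈ Finset.range n, (x + (i : ℝ))) ≠ 0 := by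
    rw [← ascPochhammer_eval_prod]; exact hp n le_rfl
  have h3 : Q.eval x = (-1 : ℝ) ^ n * ∏ j ∈ Finset.range n, (s - (b + j) / α) := by
    rw [hQev x,
      Finset.prod_congr rfl fun j (_ : j ∈ Finset.range n) =>
        show x + ((n : ℝ) - 1 + (b + j) / α) = -1 * (s - (b + j) / α) by rw [hx]; ring,
      Finset.prod_mul_distrib, Finset.prod_const, Finset.card_range]
  have hnum : ∏ j ∈ Finset.range n, (s - (b + j) / α) = (-1 : ℝ) ^ n * Q.eval x := by
    rw [h3, ← mul_assoc, ← mul_pow]; norm_num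
  have hden : ∏ i ∈ Finset.range n, (x + (i : ℝ)) = (-1 : ℝ) ^ n * ∏ j ∈ Finset.range n, (s + j) := by
    rw [← Finset.prod_range_reflect (fun i => x + (i : ℝ)) n]
    rw [Finset.prod_congr rfl fun i (hi : i ∈ Finset.range n) =>
      show x + ((n - 1 - i : ℕ) : ℝ) = -1 * (s + i) by
        have hi' := Finset.mem_range.mp hi
        rw [Nat.cast_sub (by omega), Nat.cast_sub (by omega), Nat.cast_one, hx]; ring,
      Finset.prod_mul_distrib, Finset.prod_const, Finset.card_range]
  have hden' : ∏ j ∈ Finset.range n, (s + (j : ℝ)) = (-1 : ℝ) ^ n * ∏ i ∈ Finset.range n, (x + (i : ℝ)) := by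
    rw [hden, ← mul_assoc, ← mul_pow]; norm_num
  rw [Finset.prod_div_distrib, hnum, hden', mul_div_mul_left _ _ (pow_ne_zero n (by norm_num : (-1:ℝ) ≠ 0))]
  rw [hcev x, Finset.sum_div]
  refine Finset.sum_congr rfl fun j hj => ?_
  have hjn : j ≤ n := Nat.lt_succ_iff.mp (Finset.mem_range.mp hj)
  have hsplit : (∏ i ∈ Finset.range n, (x + (i : ℝ)))
      = (∏ i ∈ Finset.range j, (x + (i : ℝ))) * ∏ i ∈ Finset.Ico j n, (x + (i : ℝ)) :=
    (Finset.prod_range_mul_prod_Ico _ hjn).symm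
  have hGne : (∏ i ∈ Finset.Ico j n, (x + (i : ℝ))) ≠ 0 :=
    right_ne_zero_of_mul (hsplit ▸ hPn)
  rw [ascPochhammer_eval_prod, hsplit, mul_div_mul_right _ _ hGne]
end

section
/- The leading coefficient in the inverse factorial expansion of Γ(s)Γ(1-b+βs)/Γ(1-a+αs) is A_0 = κ^{-1/2-ϑ} α^{a-1/2} β^{1/2-b}; precisely, Γ(s)Γ(1-b+βs)/(Γ(1-a+αs) · κ(hκ^κ)^{-s} Γ(κs+ϑ)) → A_0 as s → +∞ along the positive real axis, where κ = 1+β-α, h = α^α β^{-β}, ϑ = a-b. -/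
/-!
Stirling's formula along the reals, `Γ(c + x) ~ √(2π) x^(x+c-1/2) e^(-x)`, follows from the
factorial version: by log-convexity of `Γ` (Wendel's inequality `Γ(x+t) ≤ Γ(x) x^t` for
`0 ≤ t ≤ 1`), `log Γ(x) - ((x - 1/2) log x - x)` moves by at most `1/(2y)` as `x` runs over
`[y, y+1]`, so its limit along the reals is the one along `ℕ`. Replacing each `Γ` by its Stirling
approximation, the powers of `s` and the exponentials cancel exactly because `κ = 1 + β - α`,
which leaves the constant `A₀`.
-/

open Real Filter Topology Asymptotics
open scoped Nat

theorem mul_log_sub_log_le {x y : ℝ} (hx : 0 < x) (hy : 0 < y) :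
    x * (log y - log x) ≤ y - x := by
  have h := log_le_sub_one_of_pos (div_pos hy hx)
  rw [log_div hy.ne' hx.ne'] at h
  calc x * (log y - log x) ≤ x * (y / x - 1) := mul_le_mul_of_nonneg_left h hx.le
    _ = y - x := by field_simp

theorem log_Gamma_add_le {x t : ℝ} (hx : 0 < x) (ht₀ : 0 ≤ t) (ht₁ : t ≤ 1) :
    log (Gamma (x + t)) ≤ log (Gamma x) + t * log x := by
  have h := convexOn_log_Gamma.2 (Set.mem_Ioi.2 hx) (Set.mem_Ioi.2 (by linarith : 0 < x + 1))
    (sub_nonneg.2 ht₁) ht₀ (by ring)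
  simp only [Function.comp_apply, smul_eq_mul] at h
  rw [Gamma_add_one hx.ne', log_mul hx.ne' (Gamma_pos_of_pos hx).ne',
    show (1 - t) * x + t * (x + 1) = x + t by ring] at h
  linarith

noncomputable def stirlingLog (x : ℝ) : ℝ := log (Gamma x) - ((x - 1 / 2) * log x - x)

theorem abs_stirlingLog_sub_le {x y : ℝ} (hy : 1 / 2 ≤ y) (hyx : y ≤ x) (hxy : x ≤ y + 1) :
    |stirlingLog x - stirlingLog y| ≤ 1 / (2 * y) := by
  have hy₀ : 0 < y := by linarith
  have hx₀ : 0 < x := by linarith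
  have hup := log_Gamma_add_le hy₀ (sub_nonneg.2 hyx) (by linarith : x - y ≤ 1)
  have hlo := log_Gamma_add_le hx₀ (by linarith : 0 ≤ 1 - (x - y)) (by linarith : 1 - (x - y) ≤ 1)
  rw [add_sub_cancel] at hup
  rw [show x + (1 - (x - y)) = y + 1 by ring, Gamma_add_one hy₀.ne',
    log_mul hy₀.ne' (Gamma_pos_of_pos hy₀).ne'] at hlo
  have hlog_yx := mul_log_sub_log_le hx₀ hy₀
  have hlog_xy := mul_log_sub_log_le hy₀ hx₀
  have hgap : log x - log y ≤ 1 / y := by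
    rw [le_div_iff₀ hy₀]
    linarith
  rw [abs_le, show 1 / (2 * y) = 1 / y / 2 by ring]
  unfold stirlingLog
  constructor <;> linarith

theorem stirlingLog_natCast {n : ℕ} (hn : n ≠ 0) :
    stirlingLog n = log (Stirling.stirlingSeq n) + log 2 / 2 := by
  have hn₀ : (0 : ℝ) < n := by positivity
  have hΓ : Gamma n = n ! / n := by
    rw [← Gamma_nat_eq_factorial, Gamma_add_one hn₀.ne', mul_div_cancel_left₀ _ hn₀.ne']
  rw [stirlingLog, Stirling.log_stirlingSeq_formula, hΓ,
    log_div (by positivity) hn₀.ne', log_mul two_ne_zero hn₀.ne', log_div hn₀.ne' (exp_pos 1).ne',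
    log_exp]
  ring

theorem tendsto_stirlingLog_natCast :
    Tendsto (fun n : ℕ ↦ stirlingLog n) atTop (𝓝 (log √(2 * π))) := by
  have hlim : Tendsto (fun n : ℕ ↦ log (Stirling.stirlingSeq n) + log 2 / 2) atTop
      (𝓝 (log √π + log 2 / 2)) :=
    ((continuousAt_log (by positivity)).tendsto.comp
      Stirling.tendsto_stirlingSeq_sqrt_pi).add_const _
  rw [log_sqrt pi_pos.le] at hlim
  rw [log_sqrt (by positivity), log_mul two_ne_zero pi_ne_zero]
  convert hlim.congr' ((eventually_ne_atTop 0).mono fun n hn ↦ (stirlingLog_natCast hn).symm)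
    using 2
  ring

theorem tendsto_stirlingLog : Tendsto stirlingLog atTop (𝓝 (log √(2 * π))) := by
  have hfloor := tendsto_stirlingLog_natCast.comp (tendsto_nat_floor_atTop (α := ℝ))
  have hfloor_atTop : Tendsto (fun x : ℝ ↦ (⌊x⌋₊ : ℝ)) atTop atTop :=
    tendsto_natCast_atTop_atTop.comp tendsto_nat_floor_atTop
  have hgap : Tendsto (fun x ↦ stirlingLog x - stirlingLog ⌊x⌋₊) atTop (𝓝 0) := by
    refine squeeze_zero_norm' ?_
      ((tendsto_const_nhds (x := (1 : ℝ))).div_atTop (hfloor_atTop.const_mul_atTop two_pos))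
    filter_upwards [eventually_ge_atTop 1] with x hx
    have hfloor_one : (1 : ℝ) ≤ ⌊x⌋₊ := by exact_mod_cast Nat.one_le_floor_iff _ |>.2 hx
    exact abs_stirlingLog_sub_le (by linarith) (Nat.floor_le (by linarith))
      (Nat.lt_floor_add_one x).le
  simpa using hfloor.add hgap

noncomputable def stirlingApprox (c x : ℝ) : ℝ := √(2 * π) * x ^ (x + c - 1 / 2) * exp (-x)

theorem Gamma_isEquivalent_stirlingApprox : Gamma ~[atTop] stirlingApprox 0 := by
  refine isEquivalent_of_tendsto_one ?_
  have hlim := ((continuous_exp.tendsto _).comp tendsto_stirlingLog).div_const √(2 * π)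
  rw [exp_log (by positivity), div_self (by positivity)] at hlim
  refine hlim.congr' ?_
  filter_upwards [eventually_gt_atTop 0] with x hx
  rw [Function.comp_apply, Pi.div_apply, stirlingLog, exp_sub, exp_log (Gamma_pos_of_pos hx),
    stirlingApprox, add_zero, rpow_def_of_pos hx, exp_sub, mul_comm (log x)]
  field_simp
  rw [← exp_add, add_neg_cancel, exp_zero]

theorem tendsto_add_mul_log_one_add_div (c d : ℝ) :
    Tendsto (fun x ↦ (x + d) * log (1 + c / x)) atTop (𝓝 c) := by
  have hlog : Tendsto (fun x ↦ log (1 + c / x)) atTop (𝓝 0) := by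
    have h : Tendsto (fun x ↦ 1 + c / x) atTop (𝓝 1) := by
      simpa using tendsto_const_nhds.add ((tendsto_const_nhds (x := c)).div_atTop tendsto_id)
    simpa [Function.comp_def] using (continuousAt_log one_ne_zero).tendsto.comp h
  simpa [add_mul] using (tendsto_mul_log_one_add_div_atTop c).add (hlog.const_mul d)

theorem stirlingApprox_const_add_isEquivalent (c : ℝ) :
    (fun x ↦ stirlingApprox 0 (c + x)) ~[atTop] stirlingApprox c := by
  refine isEquivalent_of_tendsto_one ?_
  have hlim := (continuous_exp.tendsto _).comp
    ((tendsto_add_mul_log_one_add_div c (c - 1 / 2)).sub_const c)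
  rw [sub_self, exp_zero] at hlim
  refine hlim.congr' ?_
  filter_upwards [eventually_gt_atTop 0, eventually_gt_atTop (-c)] with x hx hcx
  have hcx' : 0 < c + x := by linarith
  rw [Function.comp_apply, Pi.div_apply, stirlingApprox, stirlingApprox, rpow_def_of_pos hx,
    rpow_def_of_pos hcx', mul_assoc, mul_assoc, mul_div_mul_left _ _ (by positivity),
    ← exp_add, ← exp_add, ← exp_sub, one_add_div hx.ne', add_comm x c, log_div hcx'.ne' hx.ne']
  ring_nf

theorem Gamma_const_add_isEquivalent (c : ℝ) :
    (fun x ↦ Gamma (c + x)) ~[atTop] stirlingApprox c :=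
  (Gamma_isEquivalent_stirlingApprox.comp_tendsto
    (tendsto_atTop_add_const_left _ c tendsto_id)).trans (stirlingApprox_const_add_isEquivalent c)

theorem Gamma_const_add_mul_isEquivalent (d : ℝ) {c : ℝ} (hc : 0 < c) :
    (fun s ↦ Gamma (d + c * s)) ~[atTop] fun s ↦ stirlingApprox d (c * s) :=
  (Gamma_const_add_isEquivalent d).comp_tendsto (tendsto_id.const_mul_atTop hc)

theorem stirlingApprox_quotient {α β κ a b s : ℝ} (hα : 0 < α) (hβ : 0 < β) (hκ : 0 < κ)
    (hκαβ : κ = 1 + β - α) (hs : 0 < s) :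
    stirlingApprox 0 s * stirlingApprox (1 - b) (β * s) /
        (stirlingApprox (1 - a) (α * s) *
          (κ * ((α ^ α * β ^ (-β)) * κ ^ κ) ^ (-s) * stirlingApprox (a - b) (κ * s))) =
      κ ^ (-(1 : ℝ) / 2 - (a - b)) * α ^ (a - 1 / 2) * β ^ (1 / 2 - b) := by
  refine log_injOn_pos (Set.mem_Ioi.2 (by simp only [stirlingApprox]; positivity))
    (Set.mem_Ioi.2 (by positivity)) ?_
  simp (disch := positivity) only [stirlingApprox, log_mul, log_div, log_rpow, log_exp]
  subst hκαβ
  ring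

/-- Leading coefficient of the inverse factorial expansion: with `κ = 1+β-α`,
`h = α^α β^{-β}`, `ϑ = a-b`, one has
`Γ(s)Γ(1-b+βs)/(Γ(1-a+αs) κ (hκ^κ)^{-s} Γ(κs+ϑ)) → A₀ = κ^{-1/2-ϑ} α^{a-1/2} β^{1/2-b}`
as `s → +∞` along the positive real axis. -/
theorem inverse_factorial_leading_coefficient (α β a b : ℝ)
    (hα : 0 < α) (hβ : 0 < β) (hκ : 0 < 1 + β - α) :
    Tendsto (fun s : ℝ =>
        Real.Gamma s * Real.Gamma (1 - b + β * s) /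
          (Real.Gamma (1 - a + α * s) *
            ((1 + β - α) * ((α ^ α * β ^ (-β)) * (1 + β - α) ^ (1 + β - α)) ^ (-s) *
              Real.Gamma ((1 + β - α) * s + (a - b)))))
      atTop
      (𝓝 ((1 + β - α) ^ (-(1:ℝ)/2 - (a - b)) * α ^ (a - 1/2) * β ^ (1/2 - b))) := by
  set κ := 1 + β - α with hκαβ
  simp_rw [add_comm (κ * _) (a - b)]
  have hstirling := (Gamma_isEquivalent_stirlingApprox.mul
    (Gamma_const_add_mul_isEquivalent (1 - b) hβ)).div
    ((Gamma_const_add_mul_isEquivalent (1 - a) hα).mul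
      ((IsEquivalent.refl (u := fun s ↦ κ * (α ^ α * β ^ (-β) * κ ^ κ) ^ (-s))).mul
        (Gamma_const_add_mul_isEquivalent (a - b) hκ)))
  refine (hstirling.congr_right ?_).tendsto_const
  filter_upwards [eventually_gt_atTop 0] with s hs
  exact stirlingApprox_quotient hα hβ hκ hκαβ hs
end

section
/- Define g(τ) near τ = 1 implicitly by w²/2 = τ - log τ - 1 (with w ~ τ - 1 as τ → 1), and consider F(w) = μ τ^{δ-1}/(1 - τ^μ) · dτ/dw. Then F(w) + 1/w is analytic at w = 0 and its value at w = 0 (the coefficient g_0(μ;δ)) equals 1/6 - δ + μ/2. -/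
/-!
Differentiating `w²/2 = τ - log τ - 1` gives `w τ = τ' (τ - 1)`. Writing `τ - 1 = w U` with
`U = dslope τ 0`, this becomes `τ = τ' U`, and differentiating once more at `0`, where
`τ''(0) = 2 U'(0)`, gives `τ''(0) = 2/3`.

Then `F = p / q` with `p = μ τ^(δ-1) τ'` and `q = 1 - τ^μ`, and `q` has a simple zero at `0`.
At a simple zero `a` of `q`, the quotient `p / q` is `p(a)/q'(a) · 1/(w - a)` plus an analytic
function with value `p'/q' - p q''/(2 q'²)` at `a` (write `q = (w - a) Q` and divide the
numerator of `p/q - p(a)/(q'(a)(w - a))` by `w - a` once more). Here the residue is `-1`, and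
`p'(0) = μ(δ - 1/3)` and `q''(0) = -μ(μ - 1/3)` give the constant term `1/6 - δ + μ/2`.
-/

open Real Filter Topology

section DSlope

variable {𝕜 E : Type*} [NontriviallyNormedField 𝕜] [NormedAddCommGroup E] [NormedSpace 𝕜 E]
  {f : 𝕜 → E} {a : 𝕜}

theorem analyticAt_dslope (hf : AnalyticAt 𝕜 f a) : AnalyticAt 𝕜 (dslope f a) a :=
  let ⟨_, hp⟩ := hf
  hp.has_fpower_series_dslope_fslope.analyticAt

theorem AnalyticAt.deriv_deriv_eq_two_smul_deriv_dslope [CompleteSpace E]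
    (hf : AnalyticAt 𝕜 f a) :
    deriv (deriv f) a = (2 : 𝕜) • deriv (dslope f a) a := by
  set D := dslope f a
  have hD : AnalyticAt 𝕜 D a := analyticAt_dslope hf
  have hf_eq : f = fun w => f a + (w - a) • D w := funext fun w => by
    rw [sub_smul_dslope]; abel
  have hderiv : deriv f =ᶠ[𝓝 a] fun w => (w - a) • deriv D w + (1 : 𝕜) • D w := by
    filter_upwards [hD.eventually_analyticAt] with w hw
    rw [hf_eq]
    exact ((((hasDerivAt_id w).sub_const a).smul hw.differentiableAt.hasDerivAt).const_add
      (f a)).deriv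
  have hderiv2 : HasDerivAt (fun w => (w - a) • deriv D w + (1 : 𝕜) • D w)
      ((a - a) • deriv (deriv D) a + (1 : 𝕜) • deriv D a + (1 : 𝕜) • deriv D a) a :=
    (((hasDerivAt_id a).sub_const a).smul hD.deriv.differentiableAt.hasDerivAt).add
      (hD.differentiableAt.hasDerivAt.const_smul (1 : 𝕜))
  rw [hderiv.deriv_eq, hderiv2.deriv, sub_self, zero_smul, zero_add, ← add_smul,
    one_add_one_eq_two]

end DSlope

section SimplePole

variable {𝕜 : Type*} [NontriviallyNormedField 𝕜] [CompleteSpace 𝕜] [CharZero 𝕜]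
  {p q : 𝕜 → 𝕜} {a : 𝕜}

theorem AnalyticAt.exists_regularPart_div (hp : AnalyticAt 𝕜 p a) (hq : AnalyticAt 𝕜 q a)
    (hqa : q a = 0) (hq' : deriv q a ≠ 0) :
    ∃ g : 𝕜 → 𝕜, AnalyticAt 𝕜 g a ∧
      (∀ᶠ w in 𝓝[≠] a, g w = p w / q w - p a / deriv q a / (w - a)) ∧
      g a = deriv p a / deriv q a - p a * deriv (deriv q) a / (2 * deriv q a ^ 2) := by
  set Q := dslope q a
  set r := p a / deriv q a
  have hQ : AnalyticAt 𝕜 Q a := analyticAt_dslope hq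
  have hQa : Q a = deriv q a := dslope_same q a
  have hQ'a : deriv (deriv q) a = 2 * deriv Q a := hq.deriv_deriv_eq_two_smul_deriv_dslope
  have hq_eq (w : 𝕜) : q w = (w - a) * Q w := by
    rw [← smul_eq_mul, sub_smul_dslope, hqa, sub_zero]
  set M := fun w => p w - r * Q w
  have hMa : M a = 0 := by simp only [M, hQa, r]; field_simp; ring
  refine ⟨fun w => dslope M a w / Q w,
    (analyticAt_dslope (hp.sub (analyticAt_const.mul hQ))).div hQ (hQa ▸ hq'), ?_, ?_⟩
  · filter_upwards [nhdsWithin_le_nhds (hQ.continuousAt.eventually_ne (hQa ▸ hq')),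
      self_mem_nhdsWithin] with w hQw hw
    rw [dslope_of_ne _ hw, slope_def_field, hMa, sub_zero, hq_eq]
    have hwa : w - a ≠ 0 := sub_ne_zero.mpr hw
    simp only [M]
    field_simp
  · have hM' : HasDerivAt M (deriv p a - r * deriv Q a) a :=
      hp.differentiableAt.hasDerivAt.sub (hQ.differentiableAt.hasDerivAt.const_mul r)
    simp only [dslope_same, hM'.deriv, hQa, hQ'a, r]
    field_simp

end SimplePole

section Real

variable {f : ℝ → ℝ} {x : ℝ}

theorem AnalyticAt.rpow_const (hf : AnalyticAt ℝ f x) (hx : 0 < f x) (s : ℝ) :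
    AnalyticAt ℝ (fun z => f z ^ s) x := by
  have hexp : AnalyticAt ℝ (fun z => Real.exp (Real.log (f z) * s)) x :=
    ((hf.log hx).mul analyticAt_const).rexp'
  refine hexp.congr ?_
  filter_upwards [hf.continuousAt.eventually (eventually_gt_nhds hx)] with z hz
  rw [rpow_def_of_pos hz]

theorem AnalyticAt.hasDerivAt_rpow_const_mul_deriv (hf : AnalyticAt ℝ f x) (hx : f x ≠ 0)
    (s : ℝ) :
    HasDerivAt (fun z => f z ^ s * deriv f z)
      (deriv f x * s * f x ^ (s - 1) * deriv f x + f x ^ s * deriv (deriv f) x) x :=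
  (hf.differentiableAt.hasDerivAt.rpow_const (Or.inl hx)).mul
    hf.deriv.differentiableAt.hasDerivAt

theorem AnalyticAt.deriv_one_sub_rpow_const_eventuallyEq (hf : AnalyticAt ℝ f x) (hx : f x ≠ 0)
    (s : ℝ) :
    deriv (fun z => 1 - f z ^ s) =ᶠ[𝓝 x] fun z => -s * (f z ^ (s - 1) * deriv f z) := by
  filter_upwards [hf.eventually_analyticAt, hf.continuousAt.eventually_ne hx] with z hz hz0
  rw [deriv_const_sub, deriv_rpow_const hz.differentiableAt (Or.inl hz0)]
  ring

theorem AnalyticAt.eventually_mul_eq_deriv_mul_sub_one {τ : ℝ → ℝ} (hτ : AnalyticAt ℝ τ x)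
    (hx : τ x ≠ 0) (hτeq : ∀ᶠ w in 𝓝 x, w ^ 2 / 2 = τ w - Real.log (τ w) - 1) :
    ∀ᶠ w in 𝓝 x, w * τ w = deriv τ w * (τ w - 1) := by
  have hderiv : deriv (fun w : ℝ => w ^ 2 / 2) =ᶠ[𝓝 x]
      deriv (fun w => τ w - Real.log (τ w) - 1) := Filter.EventuallyEq.deriv hτeq
  filter_upwards [hderiv, hτ.eventually_analyticAt, hτ.continuousAt.eventually_ne hx]
    with w hd hw hw0
  have hτ' := hw.differentiableAt.hasDerivAt
  have hL : HasDerivAt (fun w : ℝ => w ^ 2 / 2) w w := by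
    simpa using (hasDerivAt_pow 2 w).div_const 2
  have hR : HasDerivAt (fun w => τ w - Real.log (τ w) - 1) (deriv τ w - deriv τ w / τ w) w :=
    (hτ'.sub (hτ'.log hw0)).sub_const 1
  rw [hL.deriv, hR.deriv] at hd
  field_simp at hd
  linear_combination hd

theorem deriv_deriv_eq_two_div_three_of_mul_eq_deriv_mul_sub_one {τ : ℝ → ℝ}
    (hτ : AnalyticAt ℝ τ 0) (hτ0 : τ 0 = 1) (hτ'0 : deriv τ 0 = 1)
    (hode : ∀ᶠ w in 𝓝 0, w * τ w = deriv τ w * (τ w - 1)) :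
    deriv (deriv τ) 0 = 2 / 3 := by
  set U := dslope τ 0
  have hU : AnalyticAt ℝ U 0 := analyticAt_dslope hτ
  have hU0 : U 0 = 1 := (dslope_same τ 0).trans hτ'0
  have hτU (w : ℝ) : τ w - 1 = w * U w := by
    simpa [hτ0, eq_comm] using sub_smul_dslope τ 0 w
  have hfac : τ =ᶠ[𝓝 0] fun w => deriv τ w * U w := by
    filter_upwards [hode] with w hw
    rcases eq_or_ne w 0 with rfl | hw0
    · rw [hτ0, hτ'0, hU0, mul_one]
    · rw [hτU, mul_left_comm] at hw
      exact mul_left_cancel₀ hw0 hw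
  have hprod : HasDerivAt (fun w => deriv τ w * U w)
      (deriv (deriv τ) 0 * U 0 + deriv τ 0 * deriv U 0) 0 :=
    hτ.deriv.differentiableAt.hasDerivAt.mul hU.differentiableAt.hasDerivAt
  have hderiv := hfac.deriv_eq
  rw [hprod.deriv, hτ'0, hU0] at hderiv
  have hU' := hτ.deriv_deriv_eq_two_smul_deriv_dslope
  rw [smul_eq_mul] at hU'
  linarith

end Real

/-- Let `τ(w)` be the branch of `w²/2 = τ - log τ - 1` with `τ(0) = 1`, `τ'(0) = 1`, and
let `F(w) = μ τ^{δ-1}/(1-τ^μ) · dτ/dw`. Then `F(w) + 1/w` extends analytically across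
`w = 0` with value `g₀(μ;δ) = 1/6 - δ + μ/2` there. -/
theorem terminant_coefficient_g0 (μ δ : ℝ) (hμ : 0 < μ) (τ : ℝ → ℝ)
    (hτa : AnalyticAt ℝ τ 0) (hτ0 : τ 0 = 1) (hτ'0 : deriv τ 0 = 1)
    (hτeq : ∀ᶠ w in 𝓝 (0 : ℝ), w ^ 2 / 2 = τ w - Real.log (τ w) - 1) :
    ∃ g : ℝ → ℝ, AnalyticAt ℝ g 0 ∧
      (∀ᶠ w in 𝓝[≠] (0 : ℝ),
        g w = μ * (τ w) ^ (δ - 1) / (1 - (τ w) ^ μ) * deriv τ w + 1 / w) ∧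
      g 0 = 1 / 6 - δ + μ / 2 := by
  have hτpos : 0 < τ 0 := hτ0 ▸ one_pos
  have hτ'' : deriv (deriv τ) 0 = 2 / 3 :=
    deriv_deriv_eq_two_div_three_of_mul_eq_deriv_mul_sub_one hτa hτ0 hτ'0
      (hτa.eventually_mul_eq_deriv_mul_sub_one hτpos.ne' hτeq)
  have hρ (s : ℝ) : HasDerivAt (fun w => τ w ^ s * deriv τ w) (s + 2 / 3) 0 := by
    simpa [hτ0, hτ'0, hτ''] using hτa.hasDerivAt_rpow_const_mul_deriv hτpos.ne' s
  have hq := hτa.deriv_one_sub_rpow_const_eventuallyEq hτpos.ne' μ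
  have hq' : deriv (fun w => 1 - τ w ^ μ) 0 = -μ := by simp [hq.eq_of_nhds, hτ0, hτ'0]
  obtain ⟨g, hga, hgeq, hg0⟩ := AnalyticAt.exists_regularPart_div
    (p := fun w => μ * (τ w ^ (δ - 1) * deriv τ w)) (q := fun w => 1 - τ w ^ μ)
    (analyticAt_const.mul ((hτa.rpow_const hτpos _).mul hτa.deriv))
    (analyticAt_const.sub (hτa.rpow_const hτpos μ)) (by simp [hτ0])
    (hq' ▸ neg_ne_zero.mpr hμ.ne')
  refine ⟨g, hga, ?_, ?_⟩
  · filter_upwards [hgeq] with w hw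
    rw [hw, hq', hτ0, hτ'0, one_rpow]
    field_simp [hμ.ne']
    ring
  · rw [hg0, ((hρ (δ - 1)).const_mul μ).deriv, hq', hq.deriv_eq,
      ((hρ (μ - 1)).const_mul (-μ)).deriv, hτ0, hτ'0, one_rpow]
    field_simp
    ring
end
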